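/- Let C be a cycle of π and let t be the largest integer r with |E_r ∩ C| > b (with t = 0 if |C| ≤ b). Then E_{t+2} ∩ C = ∅. Moreover, if P is a path obtained from a cycle of π by one cut and t′ is the largest integer r with |E_r ∩ P| > b (with t′ = 0 if |P| ≤ b, levels computed on the path), then |E_{t′+2} ∩ P| = 1. -/

import Mathlib

/-!
On a cycle `C`, the map `π_{t+1}` permutes `E_{t+1} ∩ C`, a set of at most `b` elements, so every
element returns to itself after some `k ≤ b` steps and cannot be smaller than all of its `b`
successors; hence `E_{t+2} ∩ C = ∅`. On a path, `E_{t'+1}` has at most `b` elements, so any two of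
them lie within distance `b` and at most one is kept in `E_{t'+2}`, while the minimum always is.
-/

attribute [local instance] Classical.propDecidable

variable {n : ℕ}

/-- The first element of `E` encountered strictly after `x` when following `π` along its cycle
(`x` itself if no element of `E` is reachable).  For `E = E_r` this is the map `π_r`. -/
noncomputable def nextIn (π : Equiv.Perm (Fin n)) (E : Finset (Fin n)) (x : Fin n) : Fin n :=
  if h : ∃ k, 0 < k ∧ (⇑π)^[k] x ∈ E then (⇑π)^[Nat.find h] x else x

/-- `b`-fold iteration of `nextIn`; for `E = E_r` this is `π_r^b`. -/
noncomputable def stepB (π : Equiv.Perm (Fin n)) (b : ℕ) (E : Finset (Fin n)) (x : Fin n) :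
    Fin n :=
  (nextIn π E)^[b] x

/-- `level π b r` is the set `E_{r+1}` (0-indexed): `level π b 0 = E_1 = [n]`, and `E_{r+1}`
consists of the elements `i` of `E_r` with `i < π_r^k(i)` for all `k ∈ {−b,…,b} \ {0}`. -/
noncomputable def level (π : Equiv.Perm (Fin n)) (b : ℕ) : ℕ → Finset (Fin n)
  | 0 => Finset.univ
  | r + 1 =>
    (level π b r).filter fun i =>
      (∀ k ∈ Finset.Icc 1 b, i < (nextIn π (level π b r))^[k] i) ∧
      (∀ k ∈ Finset.Icc 1 b, i < (nextIn π⁻¹ (level π b r))^[k] i)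

/-- The cycle of `π` containing `x`, as a finset. -/
def cycleOfF (π : Equiv.Perm (Fin n)) (x : Fin n) : Finset (Fin n) :=
  (Finset.range n).image fun k => (⇑π)^[k] x

/-- The `b`-local minima of a path, represented as the list of values (in path order):
a position is kept iff its value is smaller than all values at distance at most `b` in the
list, comparisons with out-of-range (undefined) positions being disregarded. -/
def pmins (b : ℕ) (l : List ℕ) : List ℕ :=
  (List.range l.length).filterMap fun p =>
    if ∀ q ∈ List.range l.length, q ≠ p → p ≤ q + b → q ≤ p + b → l.getD p 0 < l.getD q 0
    then some (l.getD p 0) else none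

/-- `plevel b l r` is the list of elements of `E_{r+1}` of the path `l` (0-indexed:
`plevel b l 0 = l` is `E_1`), in path order. -/
def plevel (b : ℕ) (l : List ℕ) : ℕ → List ℕ
  | 0 => l
  | r + 1 => pmins b (plevel b l r)

/-- Advance `s` steps along the (level) list `l` from the element with value `v`;
`none` if undefined (i.e. `v ∉ l` or the advance would run past the end of the path). -/
def padv (s : ℕ) (l : List ℕ) (v : ℕ) : Option ℕ :=
  if v ∈ l ∧ l.idxOf v + s < l.length then some (l.getD (l.idxOf v + s) 0) else none

/-- Retreat `s` steps along the (level) list `l` from the element with value `v`;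
`none` if undefined. -/
def pret (s : ℕ) (l : List ℕ) (v : ℕ) : Option ℕ :=
  if v ∈ l ∧ s ≤ l.idxOf v then some (l.getD (l.idxOf v - s) 0) else none

/-- `iSeqP b l i k` is the element `i_{k+1}` of the (tentative) `b`-staircase from `i` on the
path `l`: `i_1 = i` and `i_{k+1} = π_k^b(i_k)`; `none` if undefined. -/
def iSeqP (b : ℕ) (l : List ℕ) (i : ℕ) : ℕ → Option ℕ
  | 0 => if i ∈ l then some i else none
  | k + 1 => (iSeqP b l i k).bind (padv b (plevel b l k))

/-- `jSeqP b l r m q` is the element `j_{r+1-q}` of the descending part of the `b`-staircase of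
size `r` with middle `m` on the path `l`: `j_{r+1} = m` and `j_k = π_k^b(j_{k+1})`. -/
def jSeqP (b : ℕ) (l : List ℕ) (r m : ℕ) : ℕ → Option ℕ
  | 0 => some m
  | q + 1 => (jSeqP b l r m q).bind (padv b (plevel b l (r - (q + 1))))

/-- There is a `b`-staircase of size `r` from `i` on the path `l`. -/
def IsStaircaseP (b : ℕ) (l : List ℕ) (r i : ℕ) : Prop :=
  ∃ m, iSeqP b l i r = some m ∧ m ∈ plevel b l r ∧ (jSeqP b l r m r).isSome

/-- There is an almost `b`-staircase of size `r` from `i` on the path `l`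
(membership in `E_k` required only for `k ∈ [r]`). -/
def IsAlmostP (b : ℕ) (l : List ℕ) (r i : ℕ) : Prop :=
  ∃ m, iSeqP b l i r = some m ∧ (jSeqP b l r m r).isSome

/-- The `b`-staircase of size `r` from `i` is the best one: on a path every almost
`b`-staircase is proper, so `i` has no almost `b`-staircase of size `r+1`. -/
def IsBestP (b : ℕ) (l : List ℕ) (r i : ℕ) : Prop :=
  IsStaircaseP b l r i ∧ ¬ IsAlmostP b l (r + 1) i

/-- There is a half `b`-staircase of size `r` from `i` on the path `l`:
`i_1 = i, …, i_{r+1} = m = j_r, j_{r-1}, …, j_1`. -/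
def IsHalfP (b : ℕ) (l : List ℕ) (r i : ℕ) : Prop :=
  ∃ m, iSeqP b l i r = some m ∧ (jSeqP b l (r - 1) m (r - 1)).isSome

/-- `ExtRank b l i v` says that the extended rank of `i` on the path `l` is `(t, h)`,
encoded (lexicographically faithfully) as the natural number `v = 2t + h`, where `t` is the
rank of `i` (the size of the best staircase from `i`) and `h` records whether a half staircase
of size `t+1` from `i` exists. -/
def ExtRank (b : ℕ) (l : List ℕ) (i v : ℕ) : Prop :=
  ∃ t, IsBestP b l t i ∧
    ((IsHalfP b l (t + 1) i ∧ v = 2 * t + 1) ∨ (¬ IsHalfP b l (t + 1) i ∧ v = 2 * t))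

/-- `len(u,w) = min{k > 0 : π^k(u) = w}` (0 if unreachable). -/
noncomputable def lenTo {n : ℕ} (π : Equiv.Perm (Fin n)) (u w : Fin n) : ℕ :=
  letI := Classical.propDecidable
  if h : ∃ k, 0 < k ∧ (⇑π)^[k] u = w then Nat.find h else 0

/-- The path obtained from the cycle of `π` containing `x` by cutting before `π(x)`
(i.e. setting `π(x) := ⊥`), as the list of its elements (values) in path order:
it starts at `π(x)` and ends at `x`. -/
noncomputable def pathOf {n : ℕ} (π : Equiv.Perm (Fin n)) (x : Fin n) : List ℕ :=
  (List.range (lenTo π x x)).map fun j => ((⇑π)^[j + 1] x).val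

open Function

theorem Set.MapsTo.exists_pos_iterate_eq_self {α : Type*} {f : α → α} {s : Finset α}
    (hf : Set.MapsTo f s s) (hinj : Set.InjOn f s) {x : α} (hx : x ∈ s) :
    ∃ k, 0 < k ∧ k ≤ s.card ∧ f^[k] x = x := by
  set g := hf.restrict f s s
  have hg : Injective g := hf.restrict_inj.2 hinj
  refine ⟨minimalPeriod g ⟨x, hx⟩, minimalPeriod_pos_of_mem_periodicPts (hg.mem_periodicPts _),
    by simpa using minimalPeriod_le_card (f := g) (x := ⟨x, hx⟩), ?_⟩
  exact (hf.coe_iterate_restrict _ _).symm.trans (congrArg Subtype.val iterate_minimalPeriod)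

lemma exists_pos_iterate_mem (π : Equiv.Perm (Fin n)) {E : Finset (Fin n)} {x : Fin n}
    (hx : x ∈ E) : ∃ k, 0 < k ∧ (⇑π)^[k] x ∈ E :=
  ⟨minimalPeriod π x, minimalPeriod_pos_of_mem_periodicPts (π.injective.mem_periodicPts x),
    iterate_minimalPeriod.symm ▸ hx⟩

lemma nextIn_eq_find (π : Equiv.Perm (Fin n)) {E : Finset (Fin n)} {x : Fin n} (hx : x ∈ E) :
    nextIn π E x = (⇑π)^[Nat.find (exists_pos_iterate_mem π hx)] x := by
  rw [nextIn, dif_pos (exists_pos_iterate_mem π hx)]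

lemma exists_nextIn_eq_iterate (π : Equiv.Perm (Fin n)) (E : Finset (Fin n)) (x : Fin n) :
    ∃ k, nextIn π E x = (⇑π)^[k] x := by
  rw [nextIn]
  split
  · exact ⟨_, rfl⟩
  · exact ⟨0, rfl⟩

lemma nextIn_mem (π : Equiv.Perm (Fin n)) {E : Finset (Fin n)} {x : Fin n} (hx : x ∈ E) :
    nextIn π E x ∈ E := by
  rw [nextIn_eq_find π hx]
  exact (Nat.find_spec (exists_pos_iterate_mem π hx)).2

lemma nextIn_injOn (π : Equiv.Perm (Fin n)) (E : Finset (Fin n)) :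
    Set.InjOn (nextIn π E) E := by
  intro x hx y hy hxy
  wlog hle : Nat.find (exists_pos_iterate_mem π hx) ≤ Nat.find (exists_pos_iterate_mem π hy)
    generalizing x y
  · exact (this hy hx hxy.symm (le_of_not_ge hle)).symm
  set j := Nat.find (exists_pos_iterate_mem π hx)
  set k := Nat.find (exists_pos_iterate_mem π hy)
  rw [nextIn_eq_find π hx, nextIn_eq_find π hy] at hxy
  have hyx : (⇑π)^[k - j] y = x := by
    apply π.injective.iterate j
    rw [← iterate_add_apply, Nat.add_sub_cancel' hle, hxy]
  -- `x ∈ E` is reached from `y` after `k - j < k` steps, so minimality of `k` forces `k = j`.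
  obtain hkj | hkj := Nat.eq_zero_or_pos (k - j)
  · rwa [hkj, iterate_zero_apply, eq_comm] at hyx
  · have hlt : k - j < k := Nat.sub_lt (Nat.find_spec (exists_pos_iterate_mem π hy)).1
      (Nat.find_spec (exists_pos_iterate_mem π hx)).1
    exact (Nat.find_min _ hlt ⟨hkj, hyx ▸ hx⟩).elim

lemma iterate_mem_cycleOfF (π : Equiv.Perm (Fin n)) (x : Fin n) (k : ℕ) :
    (⇑π)^[k] x ∈ cycleOfF π x := by
  rw [cycleOfF, Finset.mem_image]
  refine ⟨k % minimalPeriod π x, Finset.mem_range.2 ?_, iterate_mod_minimalPeriod_eq⟩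
  calc k % minimalPeriod π x
      < minimalPeriod π x :=
        Nat.mod_lt _ (minimalPeriod_pos_of_mem_periodicPts (π.injective.mem_periodicPts x))
    _ ≤ n := by simpa using minimalPeriod_le_card (f := π) (x := x)

lemma iterate_mem_cycleOfF_of_mem (π : Equiv.Perm (Fin n)) {x y : Fin n}
    (hy : y ∈ cycleOfF π x) (k : ℕ) : (⇑π)^[k] y ∈ cycleOfF π x := by
  obtain ⟨j, -, rfl⟩ := Finset.mem_image.1 hy
  rw [← iterate_add_apply]
  exact iterate_mem_cycleOfF π x (k + j)

lemma nextIn_mem_cycleOfF (π : Equiv.Perm (Fin n)) (E : Finset (Fin n)) {x y : Fin n}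
    (hy : y ∈ cycleOfF π x) : nextIn π E y ∈ cycleOfF π x := by
  obtain ⟨k, hk⟩ := exists_nextIn_eq_iterate π E y
  exact hk ▸ iterate_mem_cycleOfF_of_mem π hy k

theorem level_succ_inter_cycleOfF_eq_empty (π : Equiv.Perm (Fin n)) (x : Fin n) {b r : ℕ}
    (h : (level π b r ∩ cycleOfF π x).card ≤ b) :
    level π b (r + 1) ∩ cycleOfF π x = ∅ := by
  set S := level π b r ∩ cycleOfF π x
  have hmaps : Set.MapsTo (nextIn π (level π b r)) S S := fun y hy => by
    obtain ⟨hyE, hyC⟩ := Finset.mem_inter.1 hy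
    exact Finset.mem_inter.2 ⟨nextIn_mem π hyE, nextIn_mem_cycleOfF π _ hyC⟩
  have hinj : Set.InjOn (nextIn π (level π b r)) S :=
    (nextIn_injOn π _).mono (Finset.coe_subset.2 Finset.inter_subset_left)
  refine Finset.eq_empty_iff_forall_notMem.2 fun i hi => ?_
  obtain ⟨hiL, hiC⟩ := Finset.mem_inter.1 hi
  simp only [level, Finset.mem_filter] at hiL
  obtain ⟨hiE, hlt, -⟩ := hiL
  obtain ⟨k, hk0, hkS, hk⟩ := hmaps.exists_pos_iterate_eq_self hinj (Finset.mem_inter.2 ⟨hiE, hiC⟩)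
  exact (hk ▸ hlt k (Finset.mem_Icc.2 ⟨hk0, hkS.trans h⟩)).false

lemma lenTo_self (π : Equiv.Perm (Fin n)) (x : Fin n) : lenTo π x x = minimalPeriod π x := by
  have hx : x ∈ periodicPts π := π.injective.mem_periodicPts x
  have hx' : ∃ k, 0 < k ∧ π^[k] x = x := hx
  rw [lenTo, dif_pos hx', minimalPeriod, dif_pos hx]
  -- The two `Nat.find`s use different decidability instances; unification supplies both.
  exact @Nat.find_congr' _ _ ?_ ?_ hx' hx Iff.rfl

lemma pathOf_nodup (π : Equiv.Perm (Fin n)) (x : Fin n) : (pathOf π x).Nodup := by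
  rw [pathOf, lenTo_self]
  refine List.nodup_range.map_on fun a ha c hc hac => ?_
  rw [List.mem_range] at ha hc
  have : π ((⇑π)^[a] x) = π ((⇑π)^[c] x) := by
    simpa only [← iterate_succ_apply'] using Fin.val_injective hac
  exact (iterate_eq_iterate_iff_of_lt_minimalPeriod ha hc).1 (π.injective this)

lemma pathOf_ne_nil (π : Equiv.Perm (Fin n)) (x : Fin n) : pathOf π x ≠ [] := by
  simp [pathOf, lenTo_self,
    (minimalPeriod_pos_of_mem_periodicPts (π.injective.mem_periodicPts x)).ne']

theorem List.map_getD_range {α : Type*} (l : List α) (d : α) :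
    (List.range l.length).map (l.getD · d) = l :=
  List.ext_getElem (by simp) fun i _ h => by simp [List.getElem?_eq_getElem h]

theorem List.filterMap_ite_sublist_map {α β : Type*} (l : List α) (p : α → Prop)
    [DecidablePred p] (g : α → β) :
    (l.filterMap fun a => if p a then some (g a) else none).Sublist (l.map g) := by
  have := (List.filter_sublist (p := fun a => decide (p a)) (l := l)).map g
  simpa only [← List.filterMap_eq_map', List.filterMap_filter, decide_eq_true_eq] using this

lemma pmins_sublist (b : ℕ) (l : List ℕ) : (pmins b l).Sublist l := by
  conv_rhs => rw [← l.map_getD_range 0]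
  exact List.filterMap_ite_sublist_map _ _ _

lemma mem_pmins {b : ℕ} {l : List ℕ} {v : ℕ} :
    v ∈ pmins b l ↔ ∃ p < l.length,
      (∀ q < l.length, q ≠ p → p ≤ q + b → q ≤ p + b → l.getD p 0 < l.getD q 0) ∧
        l.getD p 0 = v := by
  simp [pmins]

lemma exists_mem_pmins (b : ℕ) {l : List ℕ} (hl : l.Nodup) (hne : l ≠ []) :
    ∃ v, v ∈ pmins b l := by
  obtain ⟨p, hp, hmin⟩ := (Finset.range l.length).exists_min_image (l.getD · 0)
    (by simpa using hne)
  rw [Finset.mem_range] at hp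
  refine ⟨_, mem_pmins.2 ⟨p, hp, fun q hq hqp _ _ => ?_, rfl⟩⟩
  refine (hmin q (Finset.mem_range.2 hq)).lt_of_ne fun hpq => hqp ?_
  rw [List.getD_eq_getElem _ _ hp, List.getD_eq_getElem _ _ hq] at hpq
  exact (hl.getElem_inj_iff.1 hpq).symm

lemma eq_of_mem_pmins {b : ℕ} {l : List ℕ} (hlen : l.length ≤ b + 1) {v w : ℕ}
    (hv : v ∈ pmins b l) (hw : w ∈ pmins b l) : v = w := by
  obtain ⟨p, hp, hpmin, rfl⟩ := mem_pmins.1 hv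
  obtain ⟨q, hq, hqmin, rfl⟩ := mem_pmins.1 hw
  obtain rfl | hpq := eq_or_ne p q
  · rfl
  · exact absurd (hpmin q hq hpq.symm (by omega) (by omega))
      (hqmin p hp hpq (by omega) (by omega)).not_gt

theorem length_pmins_eq_one {b : ℕ} {l : List ℕ} (hl : l.Nodup) (hne : l ≠ [])
    (hlen : l.length ≤ b + 1) : (pmins b l).length = 1 := by
  obtain ⟨v, hv⟩ := exists_mem_pmins b hl hne
  rw [← List.toFinset_card_of_nodup ((pmins_sublist b l).nodup hl), Finset.card_eq_one]
  exact ⟨v, Finset.eq_singleton_iff_unique_mem.2 ⟨List.mem_toFinset.2 hv,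
    fun w hw => eq_of_mem_pmins hlen (List.mem_toFinset.1 hw) hv⟩⟩

lemma plevel_nodup (b : ℕ) {l : List ℕ} (hl : l.Nodup) : ∀ r, (plevel b l r).Nodup
  | 0 => hl
  | r + 1 => (pmins_sublist b _).nodup (plevel_nodup b hl r)

lemma plevel_ne_nil (b : ℕ) {l : List ℕ} (hl : l.Nodup) (hne : l ≠ []) :
    ∀ r, plevel b l r ≠ []
  | 0 => hne
  | r + 1 => by
    obtain ⟨v, hv⟩ := exists_mem_pmins b (plevel_nodup b hl r) (plevel_ne_nil b hl hne r)
    exact List.ne_nil_of_mem hv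

theorem level_after_largest_general (n b : ℕ) (π : Equiv.Perm (Fin n))
    (x : Fin n) (C : Finset (Fin n)) (hC : C = cycleOfF π x)
    (t : ℕ)
    (ht2 : ∀ r, t < r → ¬ b < ((level π b (r - 1)) ∩ C).card)
    (x' : Fin n) (P : List ℕ) (hP : P = pathOf π x')
    (t' : ℕ)
    (ht2' : ∀ r, t' < r → ¬ b < (plevel b P (r - 1)).length) :
    (level π b (t + 1)) ∩ C = ∅ ∧ (plevel b P (t' + 1)).length = 1 := by
  subst hC hP
  have hcycle := ht2 (t + 1) t.lt_succ_self
  have hpath := ht2' (t' + 1) t'.lt_succ_self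
  simp only [Nat.add_sub_cancel, not_lt] at hcycle hpath
  exact ⟨level_succ_inter_cycleOfF_eq_empty π x hcycle,
    length_pmins_eq_one (plevel_nodup b (pathOf_nodup π x') t')
      (plevel_ne_nil b (pathOf_nodup π x') (pathOf_ne_nil π x') t') (by omega)⟩

/-- Let `C` be a cycle of `π` and `t` the largest `r` with `|E_r ∩ C| > b`
(`t = 0` if `|C| ≤ b`).  Then `E_{t+2} ∩ C = ∅`.  Moreover, if `P` is a path obtained from a
cycle of `π` by one cut and `t′` is the largest `r` with `|E_r ∩ P| > b` (`t′ = 0` if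
`|P| ≤ b`, levels computed on the path), then `|E_{t′+2} ∩ P| = 1`.
(Recall `level`/`plevel` are 0-indexed: `E_r = level π b (r-1)` resp. `plevel b P (r-1)`.) -/
theorem level_after_largest (n b : ℕ) (hb : 1 ≤ b) (π : Equiv.Perm (Fin n))
    (x : Fin n) (C : Finset (Fin n)) (hC : C = cycleOfF π x)
    (t : ℕ)
    (ht0 : C.card ≤ b → t = 0)
    (ht1 : t ≠ 0 → b < ((level π b (t - 1)) ∩ C).card)
    (ht2 : ∀ r, t < r → ¬ b < ((level π b (r - 1)) ∩ C).card)
    (x' : Fin n) (P : List ℕ) (hP : P = pathOf π x')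
    (t' : ℕ)
    (ht0' : P.length ≤ b → t' = 0)
    (ht1' : t' ≠ 0 → b < (plevel b P (t' - 1)).length)
    (ht2' : ∀ r, t' < r → ¬ b < (plevel b P (r - 1)).length) :
    (level π b (t + 1)) ∩ C = ∅ ∧ (plevel b P (t' + 1)).length = 1 :=
  level_after_largest_general n b π x C hC t ht2 x' P hP t' ht2'
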